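/- Let Γ be a mixed graph and v a source vertex, and let ρ : G_Γ → G_{V−{v}} be the retraction killing v. Then the kernel of ρ is a free group. -/

import Mathlib

/-- A mixed graph: a simplicial graph (given by a symmetric irreflexive adjacency
relation) together with a set `D` of oriented edges; an oriented edge is recorded as the
ordered pair `(o e, t e)` of its origin and terminus, it must be an edge of the graph,
and an edge carries at most one orientation. -/
structure MixedGraph (V : Type*) where
  /-- adjacency relation: `adj u v` iff `{u,v}` is an edge -/
  adj : V → V → Prop
  symm : ∀ u v, adj u v → adj v u
  loopless : ∀ v, ¬ adj v v
  /-- the set of oriented edges, as ordered pairs (origin, terminus) -/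
  D : Set (V × V)
  D_isEdge : ∀ e ∈ D, adj e.1 e.2
  D_antisymm : ∀ e ∈ D, (e.2, e.1) ∉ D

namespace MixedGraph

variable {V : Type*}

/-- The relators of the twisted right-angled Artin group of a mixed graph: a commutator
`u v u⁻¹ v⁻¹` for each unoriented edge `{u,v}`, and a Klein-bottle relator `a b a⁻¹ b`
for each oriented edge `[a, b⟩`. -/
def traagRels (Γ : MixedGraph V) : Set (FreeGroup V) :=
  {r | (∃ u v : V, Γ.adj u v ∧ (u, v) ∉ Γ.D ∧ (v, u) ∉ Γ.D ∧
          r = FreeGroup.of u * FreeGroup.of v * (FreeGroup.of u)⁻¹ * (FreeGroup.of v)⁻¹) ∨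
       (∃ a b : V, (a, b) ∈ Γ.D ∧
          r = FreeGroup.of a * FreeGroup.of b * (FreeGroup.of a)⁻¹ * FreeGroup.of b)}

/-- The twisted right-angled Artin group (TRAAG) based on a mixed graph `Γ`. -/
def TRAAG (Γ : MixedGraph V) : Type _ := PresentedGroup Γ.traagRels

instance (Γ : MixedGraph V) : Group (TRAAG Γ) := by unfold TRAAG; infer_instance

/-- The generator of the TRAAG corresponding to a vertex. -/
def gen (Γ : MixedGraph V) (v : V) : TRAAG Γ := PresentedGroup.of v

/-- `Γ` has an oriented cycle: a sequence `e₀, …, eₙ` of oriented edges with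
`t(eᵢ) = o(e_{i+1})` cyclically. -/
def HasOrientedCycle (Γ : MixedGraph V) : Prop :=
  ∃ (n : ℕ) (c : ZMod (n + 1) → V × V),
    (∀ i, c i ∈ Γ.D) ∧ ∀ i, (c i).2 = (c (i + 1)).1

/-- The full mixed subgraph of `Γ` spanned by a set `U` of vertices. -/
def induce (Γ : MixedGraph V) (U : Set V) : MixedGraph U where
  adj u v := Γ.adj u v
  symm u v h := Γ.symm u v h
  loopless v := Γ.loopless v
  D := {p | ((p.1 : V), (p.2 : V)) ∈ Γ.D}
  D_isEdge _ he := Γ.D_isEdge _ he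
  D_antisymm _ he := Γ.D_antisymm _ he

/-- A vertex `v` is a source if every edge containing `v` is either unoriented or
oriented with origin `v`, i.e. no oriented edge has terminus `v`. -/
def IsSource (Γ : MixedGraph V) (v : V) : Prop :=
  ∀ u : V, (u, v) ∉ Γ.D

/-- The link of a vertex: its set of neighbours. -/
def lk (Γ : MixedGraph V) (v : V) : Set V := {u | Γ.adj u v}

/-- The star of a vertex: its link together with the vertex itself. -/
def st (Γ : MixedGraph V) (v : V) : Set V := insert v (Γ.lk v)

end MixedGraph

namespace TRAAGAux

open MixedGraph

variable {V : Type} (Γ : MixedGraph V) (v : V)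

/-- relators map to 1 in the presented group -/
theorem rel_eq_one {α : Type*} {rels : Set (FreeGroup α)} {r : FreeGroup α} (hr : r ∈ rels) :
    PresentedGroup.mk rels r = 1 :=
  (QuotientGroup.eq_one_iff r).mpr (Subgroup.subset_normalClosure hr)

theorem comm_rel {a b : V} (h : Γ.adj a b) (h1 : (a, b) ∉ Γ.D) (h2 : (b, a) ∉ Γ.D) :
    Γ.gen a * Γ.gen b * (Γ.gen a)⁻¹ * (Γ.gen b)⁻¹ = 1 := by
  have := rel_eq_one (rels := Γ.traagRels)
    (r := FreeGroup.of a * FreeGroup.of b * (FreeGroup.of a)⁻¹ * (FreeGroup.of b)⁻¹)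
    (Or.inl ⟨a, b, h, h1, h2, rfl⟩)
  simp [MixedGraph.gen, PresentedGroup.of, map_mul, map_inv] at this ⊢; exact this

theorem twist_rel {a b : V} (h : (a, b) ∈ Γ.D) :
    Γ.gen a * Γ.gen b * (Γ.gen a)⁻¹ * Γ.gen b = 1 := by
  have := rel_eq_one (rels := Γ.traagRels)
    (r := FreeGroup.of a * FreeGroup.of b * (FreeGroup.of a)⁻¹ * FreeGroup.of b)
    (Or.inr ⟨a, b, h, rfl⟩)
  simp [MixedGraph.gen, PresentedGroup.of, map_mul, map_inv] at this ⊢; exact this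

/-- The canonical section `σ : G_{V-v} →* G_Γ`. -/
noncomputable def sigma : TRAAG (Γ.induce {u | u ≠ v}) →* TRAAG Γ :=
  PresentedGroup.toGroup (f := fun u => Γ.gen u.1) (by
    rintro r (⟨a, b, h, h1, h2, rfl⟩ | ⟨a, b, h, rfl⟩)
    · simpa [map_mul, map_inv] using comm_rel Γ h h1 h2
    · simpa [map_mul, map_inv] using twist_rel Γ h)

@[simp] theorem sigma_gen (u : {u : V // u ≠ v}) :
    sigma Γ v ((Γ.induce {u | u ≠ v}).gen u) = Γ.gen u.1 :=
  PresentedGroup.toGroup.of _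

section WithRho

variable (hv : Γ.IsSource v) (ρ : TRAAG Γ →* TRAAG (Γ.induce {u | u ≠ v}))
  (hρv : ρ (Γ.gen v) = 1)
  (hρu : ∀ (u : V) (hu : u ≠ v), ρ (Γ.gen u) = (Γ.induce {u | u ≠ v}).gen ⟨u, hu⟩)

theorem ne_of_D {u : V} (h : (v, u) ∈ Γ.D) : u ≠ v := by
  intro e
  exact Γ.loopless v (e ▸ Γ.D_isEdge _ h)

include hρv hρu in
theorem gen_sq_one_H {u : V} (h : (v, u) ∈ Γ.D) (hu : u ≠ v) :
    (Γ.induce {u | u ≠ v}).gen ⟨u, hu⟩ * (Γ.induce {u | u ≠ v}).gen ⟨u, hu⟩ = 1 := by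
  have h1 := congrArg ρ (twist_rel Γ h)
  simpa [map_mul, map_inv, hρv, hρu u hu] using h1

include hρv hρu in
theorem gen_sq_one_G {u : V} (h : (v, u) ∈ Γ.D) :
    Γ.gen u * Γ.gen u = 1 := by
  have hu : u ≠ v := ne_of_D Γ v h
  have h2 := congrArg (sigma Γ v) (gen_sq_one_H Γ v ρ hρv hρu h hu)
  simpa [map_mul] using h2

include hv hρv hρu in
theorem commute_nbr {u : V} (hadj : Γ.adj u v) : Commute (Γ.gen u) (Γ.gen v) := by
  by_cases hD : (v, u) ∈ Γ.D
  · have hsq := gen_sq_one_G Γ v ρ hρv hρu hD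
    have hinv : (Γ.gen u)⁻¹ = Γ.gen u := by
      rw [inv_eq_iff_mul_eq_one]; exact hsq
    have ht := twist_rel Γ hD
    have h1 : Γ.gen v * Γ.gen u * (Γ.gen v)⁻¹ = (Γ.gen u)⁻¹ :=
      eq_inv_of_mul_eq_one_left (by
        exact ht)
    rw [hinv, mul_inv_eq_iff_eq_mul] at h1
    exact h1.symm
  · have e := comm_rel Γ hadj (hv u) hD
    rw [mul_inv_eq_one] at e
    rw [mul_inv_eq_iff_eq_mul] at e
    exact e

/-- The subgroup of `G_{V - v}` generated by the images of the neighbours of `v`. -/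
def Csub : Subgroup (TRAAG (Γ.induce {u | u ≠ v})) :=
  Subgroup.closure
    {x | ∃ (u : V) (hne : u ≠ v), Γ.adj u v ∧ x = (Γ.induce {u | u ≠ v}).gen ⟨u, hne⟩}

include hv hρv hρu in
theorem sigma_commute_of_mem {c : TRAAG (Γ.induce {u | u ≠ v})} (hc : c ∈ Csub Γ v) :
    Commute (sigma Γ v c) (Γ.gen v) := by
  have hle : Csub Γ v ≤
      Subgroup.comap (sigma Γ v) (Subgroup.centralizer {Γ.gen v}) := by
    apply Subgroup.closure_le _ |>.2
    rintro x ⟨u, hne, hadj, rfl⟩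
    simp only [Set.mem_setOf_eq, SetLike.mem_coe, Subgroup.mem_comap, sigma_gen]
    rw [Subgroup.mem_centralizer_iff]
    rintro y ⟨rfl⟩
    exact (commute_nbr Γ v hv ρ hρv hρu hadj).symm.eq
  have := hle hc
  rw [Subgroup.mem_comap, Subgroup.mem_centralizer_iff] at this
  exact (this _ rfl).symm

/-- The coset space `G_{V-v} ⧸ C`. -/
abbrev Xq := TRAAG (Γ.induce {u | u ≠ v}) ⧸ Csub Γ v

/-- Permutations of a basis act on the free group. -/
def fgPerm (X : Type*) : Equiv.Perm X →* MulAut (FreeGroup X) where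
  toFun e := FreeGroup.freeGroupCongr e
  map_one' := MulEquiv.ext fun g => by
    simp [FreeGroup.freeGroupCongr_apply]
  map_mul' e f := MulEquiv.ext fun g => by
    simp [FreeGroup.freeGroupCongr_apply, ← FreeGroup.map.comp]

/-- The action of `G_{V-v}` on the free group on the coset space. -/
def phiAct : TRAAG (Γ.induce {u | u ≠ v}) →* MulAut (FreeGroup (Xq Γ v)) :=
  (fgPerm (Xq Γ v)).comp (MulAction.toPermHom (TRAAG (Γ.induce {u | u ≠ v})) (Xq Γ v))

theorem phiAct_of (h : TRAAG (Γ.induce {u | u ≠ v})) (x : Xq Γ v) :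
    phiAct Γ v h (FreeGroup.of x) = FreeGroup.of (h • x) := by
  simp [phiAct, fgPerm, FreeGroup.freeGroupCongr_apply, FreeGroup.map.of]

theorem gen_smul_one {u : V} (hne : u ≠ v) (hadj : Γ.adj u v) :
    ((Γ.induce {u | u ≠ v}).gen ⟨u, hne⟩) • ((1 : TRAAG (Γ.induce {u | u ≠ v})) : Xq Γ v)
      = ((1 : TRAAG (Γ.induce {u | u ≠ v})) : Xq Γ v) := by
  rw [MulAction.Quotient.smul_mk]
  rw [QuotientGroup.eq]
  simp only [smul_eq_mul, mul_one]
  exact Subgroup.inv_mem _ (Subgroup.subset_closure ⟨u, hne, hadj, rfl⟩)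

open SemidirectProduct in
theorem inr_conj_inl {n : FreeGroup (Xq Γ v)} {h : TRAAG (Γ.induce {u | u ≠ v})}
    (hn : phiAct Γ v h n = n) :
    (inr h : FreeGroup (Xq Γ v) ⋊[phiAct Γ v] TRAAG (Γ.induce {u | u ≠ v}))
      * inl n * (inr h)⁻¹ = inl n := by
  rw [← map_inv, ← SemidirectProduct.inl_aut, hn]

open SemidirectProduct in
/-- The embedding of `G_Γ` into `FreeGroup (H ⧸ C) ⋊ H`. -/
noncomputable def Phi :
    TRAAG Γ →* FreeGroup (Xq Γ v) ⋊[phiAct Γ v] TRAAG (Γ.induce {u | u ≠ v}) := by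
  classical
  refine PresentedGroup.toGroup
    (f := fun u : V =>
      if h : u = v then inl (FreeGroup.of ((1 : TRAAG (Γ.induce {u | u ≠ v})) : Xq Γ v))
      else inr ((Γ.induce {u | u ≠ v}).gen ⟨u, h⟩)) ?_
  rintro r (⟨a, b, h, h1, h2, rfl⟩ | ⟨a, b, h, rfl⟩)
  · -- commutator relator
    simp only [map_mul, map_inv, FreeGroup.lift_apply_of]
    by_cases ha : a = v
    · subst ha
      have hb : b ≠ a := fun e => Γ.loopless a (e ▸ h)
      rw [dif_pos rfl, dif_neg hb]
      set uu := (Γ.induce {u | u ≠ a}).gen ⟨b, hb⟩ with huu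
      set g0 := FreeGroup.of ((1 : TRAAG (Γ.induce {u | u ≠ a})) : Xq Γ a) with hg0
      have hφ : phiAct Γ a uu g0 = g0 := by
        rw [hg0, phiAct_of, gen_smul_one Γ a hb (Γ.symm _ _ h)]
      have key := inr_conj_inl Γ a (n := g0⁻¹) (h := uu) (by rw [map_inv, hφ])
      have expand : (inl g0 * inr uu * inl g0⁻¹ * (inr uu)⁻¹ :
          FreeGroup (Xq Γ a) ⋊[phiAct Γ a] TRAAG (Γ.induce {u | u ≠ a}))
          = inl g0 * (inr uu * inl g0⁻¹ * (inr uu)⁻¹) := by group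
      rw [← map_inv, expand, key, ← map_mul, mul_inv_cancel, map_one]
    · by_cases hb : b = v
      · subst hb
        rw [dif_pos rfl, dif_neg ha]
        set uu := (Γ.induce {u | u ≠ b}).gen ⟨a, ha⟩ with huu
        set g0 := FreeGroup.of ((1 : TRAAG (Γ.induce {u | u ≠ b})) : Xq Γ b) with hg0
        have hφ : phiAct Γ b uu g0 = g0 := by
          rw [hg0, phiAct_of, gen_smul_one Γ b ha h]
        have key := inr_conj_inl Γ b (n := g0) (h := uu) hφ
        rw [key, mul_inv_cancel]
      · rw [dif_neg ha, dif_neg hb]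
        rw [← map_inv, ← map_inv, ← map_mul, ← map_mul, ← map_mul,
          comm_rel (Γ.induce {u | u ≠ v}) (a := ⟨a, ha⟩) (b := ⟨b, hb⟩) h h1 h2, map_one]
  · -- twisted relator
    simp only [map_mul, map_inv, FreeGroup.lift_apply_of]
    have hadjab : Γ.adj a b := Γ.D_isEdge _ h
    by_cases ha : a = v
    · subst ha
      have hb : b ≠ a := fun e => Γ.loopless a (e ▸ hadjab)
      rw [dif_pos rfl, dif_neg hb]
      set uu := (Γ.induce {u | u ≠ a}).gen ⟨b, hb⟩ with huu
      set g0 := FreeGroup.of ((1 : TRAAG (Γ.induce {u | u ≠ a})) : Xq Γ a) with hg0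
      have hφ : phiAct Γ a uu g0 = g0 := by
        rw [hg0, phiAct_of, gen_smul_one Γ a hb (Γ.symm _ _ hadjab)]
      have hsq : uu * uu = 1 := gen_sq_one_H Γ a ρ hρv hρu h hb
      have key := inr_conj_inl Γ a (n := g0⁻¹) (h := uu) (by rw [map_inv, hφ])
      have hsq2 : (inr uu : FreeGroup (Xq Γ a) ⋊[phiAct Γ a] TRAAG (Γ.induce {u | u ≠ a}))
          * inr uu = 1 := by rw [← map_mul, hsq, map_one]
      have expand : (inl g0 * inr uu * inl g0⁻¹ * inr uu :
          FreeGroup (Xq Γ a) ⋊[phiAct Γ a] TRAAG (Γ.induce {u | u ≠ a}))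
          = inl g0 * (inr uu * inl g0⁻¹ * (inr uu)⁻¹) * (inr uu * inr uu) := by group
      rw [← map_inv, expand, key, hsq2, mul_one, ← map_mul, mul_inv_cancel, map_one]
    · by_cases hb : b = v
      · exact absurd (hb ▸ h) (hv a)
      · rw [dif_neg ha, dif_neg hb]
        rw [← map_inv, ← map_mul, ← map_mul, ← map_mul,
          twist_rel (Γ.induce {u | u ≠ v}) (a := ⟨a, ha⟩) (b := ⟨b, hb⟩) h, map_one]

include hv hρv hρu in
theorem conj_well {g g' : TRAAG (Γ.induce {u | u ≠ v})}
    (hgg : (g : Xq Γ v) = (g' : Xq Γ v)) :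
    sigma Γ v g * Γ.gen v * (sigma Γ v g)⁻¹
      = sigma Γ v g' * Γ.gen v * (sigma Γ v g')⁻¹ := by
  have hc : g⁻¹ * g' ∈ Csub Γ v := QuotientGroup.eq.mp hgg
  have comm := sigma_commute_of_mem Γ v hv ρ hρv hρu hc
  have hkey : sigma Γ v (g⁻¹ * g') * Γ.gen v * (sigma Γ v (g⁻¹ * g'))⁻¹ = Γ.gen v := by
    rw [comm.eq, mul_inv_cancel_right]
  have hgg' : g' = g * (g⁻¹ * g') := by group
  have expand : sigma Γ v g * sigma Γ v (g⁻¹ * g') * Γ.gen v *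
        ((sigma Γ v (g⁻¹ * g'))⁻¹ * (sigma Γ v g)⁻¹)
      = sigma Γ v g * (sigma Γ v (g⁻¹ * g') * Γ.gen v * (sigma Γ v (g⁻¹ * g'))⁻¹) *
        (sigma Γ v g)⁻¹ := by group
  rw [hgg', map_mul, mul_inv_rev, expand, hkey]

open SemidirectProduct in
include hv hρv hρu in
/-- The retraction `Ψ : FreeGroup (H ⧸ C) ⋊ H →* G_Γ`. -/
theorem exists_Psi :
    ∃ Ψ : (FreeGroup (Xq Γ v) ⋊[phiAct Γ v] TRAAG (Γ.induce {u | u ≠ v})) →* TRAAG Γ,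
      (∀ x : Xq Γ v, Ψ (inl (FreeGroup.of x))
          = sigma Γ v x.out * Γ.gen v * (sigma Γ v x.out)⁻¹) ∧
      (∀ g, Ψ (inr g) = sigma Γ v g) := by
  classical
  set F : FreeGroup (Xq Γ v) →* TRAAG Γ :=
    FreeGroup.lift (fun x : Xq Γ v => sigma Γ v x.out * Γ.gen v * (sigma Γ v x.out)⁻¹)
    with hF
  have hcomp : ∀ g, F.comp ((phiAct Γ v) g).toMonoidHom
      = (MulAut.conj (sigma Γ v g)).toMonoidHom.comp F := by
    intro g
    apply FreeGroup.ext_hom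
    intro x
    simp only [MonoidHom.comp_apply, MulEquiv.coe_toMonoidHom, MulAut.conj_apply, hF]
    rw [phiAct_of, FreeGroup.lift_apply_of, FreeGroup.lift_apply_of]
    have h1 : (((g • x).out : TRAAG (Γ.induce {u | u ≠ v})) : Xq Γ v)
        = ((g * x.out : TRAAG (Γ.induce {u | u ≠ v})) : Xq Γ v) := by
      rw [QuotientGroup.out_eq']
      conv_rhs => rw [← smul_eq_mul, ← MulAction.Quotient.smul_mk, QuotientGroup.out_eq']
    rw [conj_well Γ v hv ρ hρv hρu h1]
    rw [map_mul, mul_inv_rev]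
    group
  refine ⟨SemidirectProduct.lift F (sigma Γ v) hcomp, fun x => ?_, fun g => ?_⟩
  · rw [SemidirectProduct.lift_inl, hF, FreeGroup.lift_apply_of]
  · rw [SemidirectProduct.lift_inr]

theorem Phi_gen_v :
    Phi Γ v hv ρ hρv hρu (Γ.gen v)
      = SemidirectProduct.inl
          (FreeGroup.of ((1 : TRAAG (Γ.induce {u | u ≠ v})) : Xq Γ v)) := by
  unfold Phi
  exact (PresentedGroup.toGroup.of _).trans (dif_pos rfl)

theorem Phi_gen_ne {u : V} (hne : u ≠ v) :
    Phi Γ v hv ρ hρv hρu (Γ.gen u)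
      = SemidirectProduct.inr ((Γ.induce {u | u ≠ v}).gen ⟨u, hne⟩) := by
  unfold Phi
  exact (PresentedGroup.toGroup.of _).trans (dif_neg hne)

include hv hρv hρu in
theorem Phi_injective : Function.Injective (Phi Γ v hv ρ hρv hρu) := by
  classical
  obtain ⟨Ψ, hΨ1, hΨ2⟩ := exists_Psi Γ v hv ρ hρv hρu
  have hPsiPhi : Ψ.comp (Phi Γ v hv ρ hρv hρu) = MonoidHom.id (TRAAG Γ) := by
    refine PresentedGroup.ext fun x => ?_
    by_cases hx : x = v
    · subst hx
      have h1 : ((Quotient.out ((1 : TRAAG (Γ.induce {u | u ≠ x})) : Xq Γ x) :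
          TRAAG (Γ.induce {u | u ≠ x})) : Xq Γ x)
          = ((1 : TRAAG (Γ.induce {u | u ≠ x})) : Xq Γ x) := QuotientGroup.out_eq' _
      exact (congrArg Ψ (Phi_gen_v Γ x hv ρ hρv hρu)).trans
        ((hΨ1 _).trans (by
          rw [conj_well Γ x hv ρ hρv hρu h1, map_one, one_mul, inv_one, mul_one]; rfl))
    · exact (congrArg Ψ (Phi_gen_ne Γ v hv ρ hρv hρu hx)).trans
        ((hΨ2 _).trans (sigma_gen Γ v ⟨x, hx⟩))
  intro a b hab
  have hthis : Ψ (Phi Γ v hv ρ hρv hρu a) = Ψ (Phi Γ v hv ρ hρv hρu b) := congrArg Ψ hab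
  have ha : Ψ (Phi Γ v hv ρ hρv hρu a) = a := DFunLike.congr_fun hPsiPhi a
  have hb : Ψ (Phi Γ v hv ρ hρv hρu b) = b := DFunLike.congr_fun hPsiPhi b
  rw [ha, hb] at hthis
  exact hthis

include hv hρv hρu in
theorem Phi_right (g : TRAAG Γ) :
    (Phi Γ v hv ρ hρv hρu g).right = ρ g := by
  have hcomp : SemidirectProduct.rightHom.comp (Phi Γ v hv ρ hρv hρu) = ρ := by
    refine PresentedGroup.ext fun x => ?_
    by_cases hx : x = v
    · subst hx
      exact (congrArg SemidirectProduct.rightHom (Phi_gen_v Γ x hv ρ hρv hρu)).trans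
        ((SemidirectProduct.rightHom_inl _).trans hρv.symm)
    · exact (congrArg SemidirectProduct.rightHom (Phi_gen_ne Γ v hv ρ hρv hρu hx)).trans
        ((SemidirectProduct.rightHom_inr _).trans (hρu x hx).symm)
  exact DFunLike.congr_fun hcomp g

end WithRho

end TRAAGAux

open MixedGraph in
/-- If `v` is a source vertex of a mixed graph `Γ` and `ρ : G_Γ → G_{V-{v}}` is the
retraction killing `v` (sending `v` to `1` and every other generator to itself), then the
kernel of `ρ` is a free group. -/
theorem TRAAG.ker_retraction_free {V : Type} (Γ : MixedGraph V) (v : V)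
    (hv : Γ.IsSource v) (ρ : TRAAG Γ →* TRAAG (Γ.induce {u | u ≠ v}))
    (hρv : ρ (Γ.gen v) = 1)
    (hρu : ∀ (u : V) (hu : u ≠ v), ρ (Γ.gen u) = (Γ.induce {u | u ≠ v}).gen ⟨u, hu⟩) :
    ∃ S : Type, Nonempty (↥ρ.ker ≃* FreeGroup S) := by
  classical
  have hinj := TRAAGAux.Phi_injective Γ v hv ρ hρv hρu
  have hright := TRAAGAux.Phi_right Γ v hv ρ hρv hρu
  let E : ρ.ker →* FreeGroup (TRAAGAux.Xq Γ v) :=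
  { toFun := fun n => (TRAAGAux.Phi Γ v hv ρ hρv hρu (n : TRAAG Γ)).left
    map_one' := by
      show (TRAAGAux.Phi Γ v hv ρ hρv hρu ((1 : ρ.ker) : TRAAG Γ)).left = 1
      rw [show ((1 : ρ.ker) : TRAAG Γ) = 1 from rfl, map_one]
      rfl
    map_mul' := fun a b => by
      have h1 : (TRAAGAux.Phi Γ v hv ρ hρv hρu (a : TRAAG Γ)).right = 1 := by
        rw [hright]; exact MonoidHom.mem_ker.mp a.2
      show (TRAAGAux.Phi Γ v hv ρ hρv hρu ((a : TRAAG Γ) * (b : TRAAG Γ))).left = _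
      rw [map_mul, SemidirectProduct.mul_left, h1, map_one]
      rfl }
  have hEinj : Function.Injective E := by
    intro a b hab
    apply Subtype.ext
    apply hinj
    apply SemidirectProduct.ext
    · exact hab
    · rw [hright, hright, MonoidHom.mem_ker.mp a.2, MonoidHom.mem_ker.mp b.2]
  exact ⟨IsFreeGroup.Generators E.range,
    ⟨(MonoidHom.ofInjective hEinj).trans (IsFreeGroup.toFreeGroup ↥E.range)⟩⟩
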